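/- Suppose f:ℝⁿ→ℝ is continuous, bounded, attains minimum f̲ on nonempty 𝔐. Then the controllability-time condition (E) — for every x there exists a control with values in the ball of radius M reaching 𝔐 in time t(x) ≤ β(f(x)−f̲) for some constant β>0 — is equivalent to the linear-growth condition (F): dist(x,𝔐) ≤ C(f(x)−f̲) for some constant C>0 (on the relevant region). The constants are related by C = βM and β = C/M respectively. -/
import Mathlib


open MeasureTheory Set Metric

/-- Admissible control-trajectory pair with controls bounded by `M`. -/
def AdmissibleB {n : ℕ} (M : ℝ) (x : EuclideanSpace ℝ (Fin n))
    (α y : ℝ → EuclideanSpace ℝ (Fin n)) : Prop :=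
  Measurable α ∧ (∀ s, ‖α s‖ ≤ M) ∧ y 0 = x ∧ ∀ t, 0 ≤ t → HasDerivAt y (α t) t

/-- Assumption (E): every `x` can be steered to the minimizer set `𝔐` within time
`t(x) ≤ β (f(x) − f̲)` by a control with `|α| ≤ M`. -/
def AssumptionE {n : ℕ} (f : EuclideanSpace ℝ (Fin n) → ℝ) (fmin M beta : ℝ) : Prop :=
  ∀ x : EuclideanSpace ℝ (Fin n), ∃ (T : ℝ) (α y : ℝ → EuclideanSpace ℝ (Fin n)),
    0 ≤ T ∧ T ≤ beta * (f x - fmin) ∧ AdmissibleB M x α y ∧ f (y T) = fmin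

/-- Assumption (F): linear growth `dist(x,𝔐) ≤ C (f(x) − f̲)`. -/
def AssumptionF {n : ℕ} (f : EuclideanSpace ℝ (Fin n) → ℝ) (fmin C : ℝ) : Prop :=
  ∀ x : EuclideanSpace ℝ (Fin n),
    infDist x {z : EuclideanSpace ℝ (Fin n) | f z = fmin} ≤ C * (f x - fmin)

/-- for `f` continuous, bounded, attaining its minimum `f̲` on the
nonempty set `𝔐`, the controllability condition (E) with constant `β` implies the
linear-growth condition (F) with constant `C = βM`, and conversely (F) with constant
`C` implies (E) with constant `β = C/M`. -/
theorem stmt15 {n : ℕ} (f : EuclideanSpace ℝ (Fin n) → ℝ) (fmin fmax M : ℝ)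
    (hf_cont : Continuous f)
    (hf_lb : ∀ x, fmin ≤ f x) (hf_ub : ∀ x, f x ≤ fmax)
    (hmin : {x : EuclideanSpace ℝ (Fin n) | f x = fmin}.Nonempty)
    (hM : 0 < M) :
    (∀ beta : ℝ, 0 < beta → AssumptionE f fmin M beta →
      AssumptionF f fmin (beta * M)) ∧
    (∀ C : ℝ, 0 < C → AssumptionF f fmin C →
      AssumptionE f fmin M (C / M)) := by
  constructor
  · -- (E) → (F)
    intro beta hbeta hE x
    obtain ⟨T, α, y, hT0, hTle, ⟨hαm, hαb, hy0, hderiv⟩, hyT⟩ := hE x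
    have hmem : y T ∈ {z : EuclideanSpace ℝ (Fin n) | f z = fmin} := hyT
    have hdist : infDist x {z : EuclideanSpace ℝ (Fin n) | f z = fmin} ≤ dist x (y T) :=
      infDist_le_dist_of_mem hmem
    have hlip : ‖y T - y 0‖ ≤ M * ‖T - (0 : ℝ)‖ := by
      apply Convex.norm_image_sub_le_of_norm_hasDerivWithin_le
        (f' := α) (s := Set.Icc (0:ℝ) T)
      · intro t ht
        exact (hderiv t ht.1).hasDerivWithinAt
      · intro t _; exact hαb t
      · exact convex_Icc 0 T
      · exact ⟨le_refl 0, hT0⟩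
      · exact ⟨hT0, le_refl T⟩
    have : dist x (y T) ≤ M * T := by
      rw [dist_comm, dist_eq_norm, ← hy0]
      simpa [abs_of_nonneg hT0] using hlip
    calc infDist x {z : EuclideanSpace ℝ (Fin n) | f z = fmin} ≤ M * T := hdist.trans this
      _ ≤ M * (beta * (f x - fmin)) := by
          exact mul_le_mul_of_nonneg_left hTle hM.le
      _ = beta * M * (f x - fmin) := by ring
  · -- (F) → (E)
    intro C hC hF x
    have hclosed : IsClosed {z : EuclideanSpace ℝ (Fin n) | f z = fmin} :=
      isClosed_eq hf_cont continuous_const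
    obtain ⟨z, hz, hzd⟩ := hclosed.exists_infDist_eq_dist hmin x
    set d := dist x z with hd
    by_cases hd0 : d = 0
    · -- x already in 𝔐
      have hxz : x = z := by rwa [dist_eq_zero] at hd0
      refine ⟨0, fun _ => 0, fun _ => x, le_refl 0, ?_, ?_, by rw [hxz]; exact hz⟩
      · have h1 : (0:ℝ) ≤ f x - fmin := sub_nonneg.2 (hf_lb x)
        positivity
      · refine ⟨measurable_const, fun s => by simpa using hM.le, rfl, fun t _ => ?_⟩
        simpa using (hasDerivAt_const t x)
    · have hdpos : 0 < d := lt_of_le_of_ne dist_nonneg (Ne.symm hd0)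
      set v : EuclideanSpace ℝ (Fin n) := (M / d) • (z - x) with hv
      refine ⟨d / M, fun _ => v, fun t => x + t • v, by positivity, ?_, ?_, ?_⟩
      · have h1 : d ≤ C * (f x - fmin) := hzd ▸ hF x
        calc d / M ≤ (C * (f x - fmin)) / M := by gcongr
          _ = C / M * (f x - fmin) := by ring
      · refine ⟨measurable_const, fun s => ?_, by simp, fun t _ => ?_⟩
        · have : ‖v‖ = (M / d) * ‖z - x‖ := by
            rw [hv, norm_smul, Real.norm_eq_abs, abs_of_nonneg (by positivity)]
          rw [this]
          have : ‖z - x‖ = d := by rw [hd, dist_comm, dist_eq_norm]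
          rw [this, div_mul_cancel₀ _ hd0]
        · simpa using ((hasDerivAt_id t).smul_const v).const_add x
      · have : (d / M) • v = z - x := by
          rw [hv, smul_smul, div_mul_div_comm, mul_comm d M, div_self (by positivity),
            one_smul]
        simp only [this]
        have : x + (z - x) = z := by abel
        rw [this]; exact hz
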